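/- The Whitney decomposition family is well-distributed: if 𝓘 is any family of disjoint bounded intervals in ℝ and 𝓦_I is the Whitney (dyadic-type) decomposition of each I ∈ 𝓘, then the family 𝓦^𝓘 := ∪_{I∈𝓘} 𝓦_I satisfies sup_{x∈ℝ} Σ_{J ∈ 𝓦^𝓘} χ_{2J}(x) ≤ 5, where 2J is the interval with the same center as J and twice its length. -/
import Mathlib


/-- Endpoints of the `k`-th Whitney piece of the interval `(a,b)`:
for `side = true` the piece `[a + (b-a)/2^{k+2}, a + (b-a)/2^{k+1})` shrinking toward `a`,
for `side = false` the piece `[b - (b-a)/2^{k+1}, b - (b-a)/2^{k+2})` shrinking toward `b`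
(`k = 0` gives the two middle quarters). -/
noncomputable def whitneyEnds (a b : ℝ) (k : ℕ) (side : Bool) : ℝ × ℝ :=
  if side then (a + (b - a) / 2 ^ (k + 2), a + (b - a) / 2 ^ (k + 1))
  else (b - (b - a) / 2 ^ (k + 1), b - (b - a) / 2 ^ (k + 2))

/-- The double `2J` of the interval `J = [u, v)`: same center, twice the length. -/
def dblSet (e : ℝ × ℝ) : Set ℝ :=
  Set.Ico (e.1 - (e.2 - e.1) / 2) (e.2 + (e.2 - e.1) / 2)


lemma dbl_true (a b : ℝ) (k : ℕ) :
    dblSet (whitneyEnds a b k true) =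
      Set.Ico (a + (b - a) / 2 ^ (k + 3)) (a + 5 * ((b - a) / 2 ^ (k + 3))) := by
  simp only [whitneyEnds, dblSet, if_true]
  ring_nf

lemma dbl_false (a b : ℝ) (k : ℕ) :
    dblSet (whitneyEnds a b k false) =
      Set.Ico (b - 5 * ((b - a) / 2 ^ (k + 3))) (b - (b - a) / 2 ^ (k + 3)) := by
  simp only [whitneyEnds, dblSet, Bool.false_eq_true, if_false]
  ring_nf

lemma mem_true_iff {a b x : ℝ} {k : ℕ} :
    x ∈ dblSet (whitneyEnds a b k true) ↔
      (b - a) ≤ (x - a) * 2 ^ (k + 3) ∧ (x - a) * 2 ^ (k + 3) < 5 * (b - a) := by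
  have hp : (0:ℝ) < 2 ^ (k + 3) := by positivity
  rw [dbl_true, Set.mem_Ico]
  have e5 : 5 * (b - a) / 2 ^ (k + 3) = 5 * ((b - a) / 2 ^ (k + 3)) := by ring
  constructor
  · rintro ⟨h1, h2⟩
    refine ⟨by rw [← div_le_iff₀ hp]; linarith, by rw [← lt_div_iff₀ hp, e5]; linarith⟩
  · rintro ⟨h1, h2⟩
    rw [← div_le_iff₀ hp] at h1
    rw [← lt_div_iff₀ hp, e5] at h2
    exact ⟨by linarith, by linarith⟩

lemma mem_false_iff {a b x : ℝ} {k : ℕ} :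
    x ∈ dblSet (whitneyEnds a b k false) ↔
      (b - a) < (b - x) * 2 ^ (k + 3) ∧ (b - x) * 2 ^ (k + 3) ≤ 5 * (b - a) := by
  have hp : (0:ℝ) < 2 ^ (k + 3) := by positivity
  rw [dbl_false, Set.mem_Ico]
  have e5 : 5 * (b - a) / 2 ^ (k + 3) = 5 * ((b - a) / 2 ^ (k + 3)) := by ring
  constructor
  · rintro ⟨h1, h2⟩
    refine ⟨by rw [← div_lt_iff₀ hp]; linarith, by rw [← le_div_iff₀ hp, e5]; linarith⟩
  · rintro ⟨h1, h2⟩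
    rw [← div_lt_iff₀ hp] at h1
    rw [← le_div_iff₀ hp, e5] at h2
    exact ⟨by linarith, by linarith⟩

lemma pow8 (k : ℕ) : (8:ℝ) ≤ 2 ^ (k + 3) := by
  calc (8:ℝ) = 2 ^ 3 := by norm_num
  _ ≤ 2 ^ (k + 3) := by
    apply pow_le_pow_right₀ (by norm_num) (by omega)

lemma pow32 {k : ℕ} (hk : 2 ≤ k) : (32:ℝ) ≤ 2 ^ (k + 3) := by
  calc (32:ℝ) = 2 ^ 5 := by norm_num
  _ ≤ 2 ^ (k + 3) := by
    apply pow_le_pow_right₀ (by norm_num) (by omega)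

lemma mem_Ioo_of_mem {a b x : ℝ} (hab : a < b) {k : ℕ} {s : Bool}
    (h : x ∈ dblSet (whitneyEnds a b k s)) : x ∈ Set.Ioo a b := by
  have hp : (0:ℝ) < 2 ^ (k + 3) := by positivity
  have h8 := pow8 k
  cases s
  · obtain ⟨h1, h2⟩ := mem_false_iff.mp h
    have hbx : 0 < b - x := by nlinarith
    have : (b - x) * 8 ≤ (b - x) * 2 ^ (k + 3) :=
      mul_le_mul_of_nonneg_left h8 hbx.le
    constructor <;> nlinarith
  · obtain ⟨h1, h2⟩ := mem_true_iff.mp h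
    have hxa : 0 < x - a := by nlinarith
    have : (x - a) * 8 ≤ (x - a) * 2 ^ (k + 3) :=
      mul_le_mul_of_nonneg_left h8 hxa.le
    constructor <;> nlinarith

/-- the union of the Whitney decompositions of a family of disjoint bounded
intervals is well-distributed: every point of `ℝ` lies in at most 5 of the doubled Whitney
pieces. -/
theorem whitney_well_distributed (α β : ℕ → ℝ) (hab : ∀ i, α i < β i)
    (hdisj : Pairwise (Function.onFun Disjoint (fun i => Set.Ioo (α i) (β i)))) :
    ∀ x : ℝ,
      ({q : ℕ × ℕ × Bool | x ∈ dblSet (whitneyEnds (α q.1) (β q.1) q.2.1 q.2.2)}).Finite ∧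
      ({q : ℕ × ℕ × Bool | x ∈ dblSet (whitneyEnds (α q.1) (β q.1) q.2.1 q.2.2)}).ncard ≤ 5 := by
  classical
  intro x
  set S : Set (ℕ × ℕ × Bool) :=
    {q : ℕ × ℕ × Bool | x ∈ dblSet (whitneyEnds (α q.1) (β q.1) q.2.1 q.2.2)} with hSdef
  rcases Set.eq_empty_or_nonempty S with hE | ⟨⟨i₀, k₀, s₀⟩, hq₀⟩
  · rw [hE]; exact ⟨Set.finite_empty, by simp⟩
  have hIoo : ∀ q ∈ S, x ∈ Set.Ioo (α q.1) (β q.1) := fun q hq =>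
    mem_Ioo_of_mem (hab q.1) hq
  have hfst : ∀ q ∈ S, q.1 = i₀ := by
    intro q hq
    by_contra hne
    exact Set.disjoint_left.mp (hdisj hne) (hIoo q hq) (hIoo _ hq₀)
  set a := α i₀ with ha
  set b := β i₀ with hb
  have hL : 0 < b - a := sub_pos.mpr (hab i₀)
  have hx : x ∈ Set.Ioo a b := hIoo _ hq₀
  have hxa : 0 < x - a := sub_pos.mpr hx.1
  have hbx : 0 < b - x := sub_pos.mpr hx.2
  -- membership predicates for each side
  have memT : ∀ k : ℕ, (i₀, k, true) ∈ S ↔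
      (b - a) ≤ (x - a) * 2 ^ (k + 3) ∧ (x - a) * 2 ^ (k + 3) < 5 * (b - a) := by
    intro k; exact mem_true_iff
  have memF : ∀ k : ℕ, (i₀, k, false) ∈ S ↔
      (b - a) < (b - x) * 2 ^ (k + 3) ∧ (b - x) * 2 ^ (k + 3) ≤ 5 * (b - a) := by
    intro k; exact mem_false_iff
  -- gap lemmas: two membership indices on one side differ by at most 2
  have gapT : ∀ k k' : ℕ, (i₀, k, true) ∈ S → (i₀, k', true) ∈ S → k ≤ k' → k' ≤ k + 2 := by
    intro k k' hk hk' hle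
    by_contra hgt
    have h3 : k + 6 ≤ k' + 3 := by omega
    have hpow : (2:ℝ) ^ (k + 3) * 8 ≤ 2 ^ (k' + 3) := by
      calc (2:ℝ) ^ (k + 3) * 8 = 2 ^ (k + 6) := by ring
      _ ≤ 2 ^ (k' + 3) := pow_le_pow_right₀ (by norm_num) h3
    obtain ⟨hk1, _⟩ := (memT k).mp hk
    obtain ⟨_, hk2⟩ := (memT k').mp hk'
    nlinarith [mul_le_mul_of_nonneg_left hpow hxa.le]
  have gapF : ∀ k k' : ℕ, (i₀, k, false) ∈ S → (i₀, k', false) ∈ S → k ≤ k' → k' ≤ k + 2 := by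
    intro k k' hk hk' hle
    by_contra hgt
    have h3 : k + 6 ≤ k' + 3 := by omega
    have hpow : (2:ℝ) ^ (k + 3) * 8 ≤ 2 ^ (k' + 3) := by
      calc (2:ℝ) ^ (k + 3) * 8 = 2 ^ (k + 6) := by ring
      _ ≤ 2 ^ (k' + 3) := pow_le_pow_right₀ (by norm_num) h3
    obtain ⟨hk1, _⟩ := (memF k).mp hk
    obtain ⟨_, hk2⟩ := (memF k').mp hk'
    nlinarith [mul_le_mul_of_nonneg_left hpow hbx.le]
  by_cases hT : ∃ k, (i₀, k, true) ∈ S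
  · by_cases hF : ∃ k, (i₀, k, false) ∈ S
    · -- both sides nonempty: each side has at most 2 indices
      set k₁ := Nat.find hT with hk₁
      set k₂ := Nat.find hF with hk₂
      have hk₁S := Nat.find_spec hT
      have hk₂S := Nat.find_spec hF
      -- if the left side had index k₁ + 2, contradiction with the right side nonempty
      have claimT : ∀ k, (i₀, k, true) ∈ S → k = k₁ ∨ k = k₁ + 1 := by
        intro k hk
        have hge : k₁ ≤ k := Nat.find_min' hT hk
        have hle : k ≤ k₁ + 2 := gapT k₁ k hk₁S hk hge
        rcases Nat.lt_or_ge k (k₁ + 2) with h | h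
        · omega
        · exfalso
          have hkk : k = k₁ + 2 := by omega
          have h32 : (32:ℝ) ≤ 2 ^ (k + 3) := pow32 (by omega)
          obtain ⟨_, hupper⟩ := (memT k).mp hk
          obtain ⟨_, hupperF⟩ := (memF k₂).mp hk₂S
          have h1 : (x - a) * 32 ≤ (x - a) * 2 ^ (k + 3) :=
            mul_le_mul_of_nonneg_left h32 hxa.le
          have h2 : (b - x) * 8 ≤ (b - x) * 2 ^ (k₂ + 3) :=
            mul_le_mul_of_nonneg_left (pow8 k₂) hbx.le
          nlinarith
      have claimF : ∀ k, (i₀, k, false) ∈ S → k = k₂ ∨ k = k₂ + 1 := by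
        intro k hk
        have hge : k₂ ≤ k := Nat.find_min' hF hk
        have hle : k ≤ k₂ + 2 := gapF k₂ k hk₂S hk hge
        rcases Nat.lt_or_ge k (k₂ + 2) with h | h
        · omega
        · exfalso
          have h32 : (32:ℝ) ≤ 2 ^ (k + 3) := pow32 (by omega)
          obtain ⟨_, hupper⟩ := (memF k).mp hk
          obtain ⟨_, hupperT⟩ := (memT k₁).mp hk₁S
          have h1 : (b - x) * 32 ≤ (b - x) * 2 ^ (k + 3) :=
            mul_le_mul_of_nonneg_left h32 hbx.le
          have h2 : (x - a) * 8 ≤ (x - a) * 2 ^ (k₁ + 3) :=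
            mul_le_mul_of_nonneg_left (pow8 k₁) hxa.le
          nlinarith
      have hsub : S ⊆ {(i₀, k₁, true), (i₀, k₁ + 1, true), (i₀, k₂, false), (i₀, k₂ + 1, false)} := by
        rintro ⟨i, k, s⟩ hq
        have hi : i = i₀ := hfst _ hq
        subst hi
        cases s
        · rcases claimF k hq with h | h <;> simp [h]
        · rcases claimT k hq with h | h <;> simp [h]
      have hfin : S.Finite := Set.Finite.subset (Set.toFinite _) hsub
      refine ⟨hfin, ?_⟩
      calc S.ncard ≤ ({(i₀, k₁, true), (i₀, k₁ + 1, true), (i₀, k₂, false),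
            (i₀, k₂ + 1, false)} : Set (ℕ × ℕ × Bool)).ncard :=
        Set.ncard_le_ncard hsub (Set.toFinite _)
      _ ≤ 5 := by
        apply le_trans (Set.ncard_insert_le _ _)
        have h2 := Set.ncard_insert_le (i₀, k₁ + 1, true)
          ({(i₀, k₂, false), (i₀, k₂ + 1, false)} : Set (ℕ × ℕ × Bool))
        have h3 := Set.ncard_insert_le (i₀, k₂, false)
          ({(i₀, k₂ + 1, false)} : Set (ℕ × ℕ × Bool))
        have h4 : ({(i₀, k₂ + 1, false)} : Set (ℕ × ℕ × Bool)).ncard = 1 :=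
          Set.ncard_singleton _
        omega
    · -- only left side
      set k₁ := Nat.find hT with hk₁
      have hk₁S := Nat.find_spec hT
      have hsub : S ⊆ {(i₀, k₁, true), (i₀, k₁ + 1, true), (i₀, k₁ + 2, true)} := by
        rintro ⟨i, k, s⟩ hq
        have hi : i = i₀ := hfst _ hq
        subst hi
        cases s
        · exact absurd ⟨k, hq⟩ hF
        · have hge : k₁ ≤ k := Nat.find_min' hT hq
          have hle : k ≤ k₁ + 2 := gapT k₁ k hk₁S hq hge
          have : k = k₁ ∨ k = k₁ + 1 ∨ k = k₁ + 2 := by omega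
          rcases this with h | h | h <;> simp [h]
      have hfin : S.Finite := Set.Finite.subset (Set.toFinite _) hsub
      refine ⟨hfin, ?_⟩
      calc S.ncard ≤ ({(i₀, k₁, true), (i₀, k₁ + 1, true),
            (i₀, k₁ + 2, true)} : Set (ℕ × ℕ × Bool)).ncard :=
        Set.ncard_le_ncard hsub (Set.toFinite _)
      _ ≤ 5 := by
        apply le_trans (Set.ncard_insert_le _ _)
        have h2 := Set.ncard_insert_le (i₀, k₁ + 1, true)
          ({(i₀, k₁ + 2, true)} : Set (ℕ × ℕ × Bool))
        have h3 : ({(i₀, k₁ + 2, true)} : Set (ℕ × ℕ × Bool)).ncard = 1 :=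
          Set.ncard_singleton _
        omega
  · by_cases hF : ∃ k, (i₀, k, false) ∈ S
    · set k₂ := Nat.find hF with hk₂
      have hk₂S := Nat.find_spec hF
      have hsub : S ⊆ {(i₀, k₂, false), (i₀, k₂ + 1, false), (i₀, k₂ + 2, false)} := by
        rintro ⟨i, k, s⟩ hq
        have hi : i = i₀ := hfst _ hq
        subst hi
        cases s
        · have hge : k₂ ≤ k := Nat.find_min' hF hq
          have hle : k ≤ k₂ + 2 := gapF k₂ k hk₂S hq hge
          have : k = k₂ ∨ k = k₂ + 1 ∨ k = k₂ + 2 := by omega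
          rcases this with h | h | h <;> simp [h]
        · exact absurd ⟨k, hq⟩ hT
      have hfin : S.Finite := Set.Finite.subset (Set.toFinite _) hsub
      refine ⟨hfin, ?_⟩
      calc S.ncard ≤ ({(i₀, k₂, false), (i₀, k₂ + 1, false),
            (i₀, k₂ + 2, false)} : Set (ℕ × ℕ × Bool)).ncard :=
        Set.ncard_le_ncard hsub (Set.toFinite _)
      _ ≤ 5 := by
        apply le_trans (Set.ncard_insert_le _ _)
        have h2 := Set.ncard_insert_le (i₀, k₂ + 1, false)
          ({(i₀, k₂ + 2, false)} : Set (ℕ × ℕ × Bool))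
        have h3 : ({(i₀, k₂ + 2, false)} : Set (ℕ × ℕ × Bool)).ncard = 1 :=
          Set.ncard_singleton _
        omega
    · exfalso
      cases s₀
      · exact hF ⟨k₀, hq₀⟩
      · exact hT ⟨k₀, hq₀⟩
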